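/- Let X be a real random variable with 0 < E|X| < ∞. Define H(t) = E[X² 1{|X| ≤ t}] and M(t) = E[|X| 1{|X| > t}] for t ≥ 0. Then the function G(t) = t²/(H(t) + t·M(t)), defined for t > 0, is continuous and strictly increasing on (0, ∞). -/

import Mathlib

open MeasureTheory ProbabilityTheory Filter Set
open scoped ProbabilityTheory

/-!
Since `X² 1{|X| ≤ t} + t |X| 1{|X| > t} = |X| min(|X|, t)`, the denominator of `G` is
`D(t) = E[|X| min(|X|, t)]`. It is Lipschitz in `t` with constant `E|X|`, and positive for `t > 0`
because `|X|` is not a.s. zero. For each `y > 0` the map `t ↦ y min(y, t) / t²` is strictly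
decreasing on `(0, ∞)`, so after integrating over the event `{|X| > 0}` of positive probability,
`D(t) / t² = 1 / G(t)` is strictly decreasing.
-/

lemma mul_min_le_mul_min {y s t : ℝ} (hy : 0 ≤ y) (hs : 0 ≤ s) (hst : s ≤ t) :
    s * min y t ≤ t * min y s := by
  rcases le_total y s with hys | hsy
  · rw [min_eq_left hys, min_eq_left (hys.trans hst)]
    exact mul_le_mul_of_nonneg_right hst hy
  · rw [min_eq_right hsy, mul_comm t s]
    exact mul_le_mul_of_nonneg_left (min_le_right y t) hs

lemma sq_mul_mul_min_lt {y s t : ℝ} (hy : 0 < y) (hs : 0 < s) (hst : s < t) :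
    s ^ 2 * (y * min y t) < t ^ 2 * (y * min y s) := by
  have hmin : 0 < y * min y s := mul_pos hy (lt_min hy hs)
  calc s ^ 2 * (y * min y t) = s * y * (s * min y t) := by ring
    _ ≤ s * y * (t * min y s) :=
        mul_le_mul_of_nonneg_left (mul_min_le_mul_min hy.le hs.le hst.le) (by positivity)
    _ = s * t * (y * min y s) := by ring
    _ < t * t * (y * min y s) := by gcongr; linarith
    _ = t ^ 2 * (y * min y s) := by ring

namespace MeasureTheory

variable {Ω : Type*} [MeasurableSpace Ω] {μ : Measure Ω}

lemma integral_pos_of_support_subset {f g : Ω → ℝ} (hf : 0 ≤ f) (hfi : Integrable f μ)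
    (hg : 0 ≤ g) (hgi : Integrable g μ) (hg_pos : 0 < ∫ ω, g ω ∂μ)
    (hsupp : Function.support g ⊆ Function.support f) : 0 < ∫ ω, f ω ∂μ := by
  rw [integral_pos_iff_support_of_nonneg hg hgi] at hg_pos
  rw [integral_pos_iff_support_of_nonneg hf hfi]
  exact hg_pos.trans_le (measure_mono hsupp)

noncomputable def minMoment (μ : Measure Ω) (Y : Ω → ℝ) (t : ℝ) : ℝ :=
  ∫ ω, Y ω * min (Y ω) t ∂μ

variable {Y : Ω → ℝ}

lemma integrable_mul_min (hY : Integrable Y μ) (hY0 : 0 ≤ Y) (t : ℝ) :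
    Integrable (fun ω => Y ω * min (Y ω) t) μ := by
  refine hY.mul_bdd (c := |t|) (hY.aestronglyMeasurable.inf aestronglyMeasurable_const)
    (ae_of_all _ fun ω => ?_)
  rw [Real.norm_eq_abs]
  rcases le_total (Y ω) t with h | h
  · rw [min_eq_left h, abs_of_nonneg (hY0 ω)]
    exact h.trans (le_abs_self t)
  · rw [min_eq_right h]

lemma lipschitzWith_minMoment (hY : Integrable Y μ) (hY0 : 0 ≤ Y) :
    LipschitzWith (∫ ω, Y ω ∂μ).toNNReal (minMoment μ Y) := by
  refine LipschitzWith.of_dist_le_mul fun a b => ?_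
  have hbound : ∀ ω, ‖Y ω * min (Y ω) a - Y ω * min (Y ω) b‖ ≤ Y ω * |a - b| := fun ω => by
    rw [← mul_sub, Real.norm_eq_abs, abs_mul, abs_of_nonneg (hY0 ω)]
    refine mul_le_mul_of_nonneg_left ?_ (hY0 ω)
    simpa using abs_min_sub_min_le_max (Y ω) a (Y ω) b
  have := norm_integral_le_of_norm_le (hY.mul_const |a - b|) (ae_of_all _ hbound)
  rw [integral_mul_const, integral_sub (integrable_mul_min hY hY0 a)
    (integrable_mul_min hY hY0 b)] at this
  rw [Real.dist_eq, Real.dist_eq, Real.coe_toNNReal _ (integral_nonneg hY0)]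
  exact this

lemma minMoment_pos (hY : Integrable Y μ) (hY0 : 0 ≤ Y) (hpos : 0 < ∫ ω, Y ω ∂μ) {t : ℝ}
    (ht : 0 < t) : 0 < minMoment μ Y t := by
  refine integral_pos_of_support_subset (fun ω => mul_nonneg (hY0 ω) (le_min (hY0 ω) ht.le))
    (integrable_mul_min hY hY0 t) hY0 hY hpos fun ω hω => ?_
  have hYω : 0 < Y ω := (hY0 ω).lt_of_ne' hω
  exact (mul_pos hYω (lt_min hYω ht)).ne'

lemma sq_mul_minMoment_lt (hY : Integrable Y μ) (hY0 : 0 ≤ Y) (hpos : 0 < ∫ ω, Y ω ∂μ)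
    {s t : ℝ} (hs : 0 < s) (hst : s < t) :
    s ^ 2 * minMoment μ Y t < t ^ 2 * minMoment μ Y s := by
  have hle : ∀ ω, s ^ 2 * (Y ω * min (Y ω) t) ≤ t ^ 2 * (Y ω * min (Y ω) s) := fun ω => by
    rcases (hY0 ω).eq_or_lt with h | h
    · simp [← h]
    · exact (sq_mul_mul_min_lt h hs hst).le
  have hint := ((integrable_mul_min hY hY0 s).const_mul (t ^ 2)).sub
    ((integrable_mul_min hY hY0 t).const_mul (s ^ 2))
  have := integral_pos_of_support_subset (fun ω => sub_nonneg.mpr (hle ω)) hint hY0 hY hpos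
    fun ω hω => (sub_pos.mpr (sq_mul_mul_min_lt ((hY0 ω).lt_of_ne' hω) hs hst)).ne'
  rw [integral_sub ((integrable_mul_min hY hY0 s).const_mul _)
    ((integrable_mul_min hY hY0 t).const_mul _), integral_const_mul, integral_const_mul] at this
  unfold minMoment
  linarith

lemma continuousOn_sq_div_minMoment (hY : Integrable Y μ) (hY0 : 0 ≤ Y)
    (hpos : 0 < ∫ ω, Y ω ∂μ) : ContinuousOn (fun t => t ^ 2 / minMoment μ Y t) (Ioi 0) :=
  (continuous_pow 2).continuousOn.div (lipschitzWith_minMoment hY hY0).continuous.continuousOn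
    fun _ ht => (minMoment_pos hY hY0 hpos ht).ne'

lemma strictMonoOn_sq_div_minMoment (hY : Integrable Y μ) (hY0 : 0 ≤ Y)
    (hpos : 0 < ∫ ω, Y ω ∂μ) : StrictMonoOn (fun t => t ^ 2 / minMoment μ Y t) (Ioi 0) := by
  intro s hs t ht hst
  rw [div_lt_div_iff₀ (minMoment_pos hY hY0 hpos hs) (minMoment_pos hY hY0 hpos ht)]
  exact sq_mul_minMoment_lt hY hY0 hpos hs hst

lemma integral_ite_sq_add_mul_integral_ite {X : Ω → ℝ} (hX : Integrable X μ) (t : ℝ) :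
    (∫ ω, (if |X ω| ≤ t then X ω ^ 2 else 0) ∂μ)
      + t * ∫ ω, (if t < |X ω| then |X ω| else 0) ∂μ = minMoment μ (fun ω => |X ω|) t := by
  have htail : Integrable (fun ω => if t < |X ω| then |X ω| else 0) μ := by
    refine hX.abs.mono ?_ (ae_of_all _ fun ω => ?_)
    · have : Measurable fun x : ℝ => if t < |x| then |x| else 0 :=
        Measurable.ite (measurableSet_lt measurable_const measurable_abs) measurable_abs
          measurable_const
      exact (this.comp_aemeasurable hX.aemeasurable).aestronglyMeasurable
    · split_ifs <;> simp
  have hsplit : ∀ ω, (if |X ω| ≤ t then X ω ^ 2 else 0) + t * (if t < |X ω| then |X ω| else 0)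
      = |X ω| * min |X ω| t := fun ω => by
    rcases le_or_gt |X ω| t with h | h
    · rw [if_pos h, if_neg h.not_gt, min_eq_left h, ← sq_abs, sq]
      ring
    · rw [if_neg h.not_ge, if_pos h, min_eq_right h.le]
      ring
  have htrunc : Integrable (fun ω => if |X ω| ≤ t then X ω ^ 2 else 0) μ := by
    refine ((integrable_mul_min hX.abs fun ω => abs_nonneg (X ω)) t |>.sub
      (htail.const_mul t)).congr (ae_of_all _ fun ω => ?_)
    rw [Pi.sub_apply, ← hsplit ω, add_sub_cancel_right]
  rw [← integral_const_mul, ← integral_add htrunc (htail.const_mul t)]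
  exact integral_congr_ae (ae_of_all _ hsplit)

end MeasureTheory

theorem stmt_0 {Ω : Type*} [MeasureSpace Ω]
    (X : Ω → ℝ)
    (hInt : Integrable X) (hpos : 0 < ∫ ω, |X ω|)
    (H M G : ℝ → ℝ)
    (hH : ∀ t, H t = ∫ ω, (if |X ω| ≤ t then (X ω) ^ 2 else 0))
    (hM : ∀ t, M t = ∫ ω, (if t < |X ω| then |X ω| else 0))
    (hG : ∀ t, G t = t ^ 2 / (H t + t * M t)) :
    ContinuousOn G (Ioi 0) ∧ StrictMonoOn G (Ioi 0) := by
  have hG' : G = fun t => t ^ 2 / minMoment ℙ (fun ω => |X ω|) t := funext fun t => by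
    rw [hG, hH, hM, integral_ite_sq_add_mul_integral_ite hInt]
  rw [hG']
  have hX0 : 0 ≤ fun ω => |X ω| := fun ω => abs_nonneg (X ω)
  exact ⟨continuousOn_sq_div_minMoment hInt.abs hX0 hpos,
    strictMonoOn_sq_div_minMoment hInt.abs hX0 hpos⟩
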